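/- arXiv:1712.01225 — 2 statements merged into one kernel-verified Lean document; each statement's English description precedes it below -/
import Mathlib

section
/- Let H = (V,E) be a finite contextuality scenario and 𝒮 ⊆ V a set of pairwise exclusive events. If p is a quantum model on H (there is a finite-dimensional Hilbert space, density operator ρ, and projections P_v with ∑_{v∈e} P_v = 1 for all e ∈ E and p(v) = tr(P_v ρ)), then ∑_{v∈𝒮} p(v) ≤ 1. -/
/-!
Exclusive events have orthogonal projections: if `u ≠ v` lie in a common hyperedge then
`P u + P v ≤ 1`, and for two projections this forces `P u * P v = 0`. Hence `Q = ∑ v ∈ S, P v`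
is again a projection, so `Q ≤ 1`, and `∑ v ∈ S, p v = tr (Q ρ) ≤ tr ρ = 1` because `ρ ≥ 0`.
-/

open scoped ComplexOrder MatrixOrder Matrix.Norms.L2Operator

theorem isStarProjection_sum {R ι : Type*} [NonUnitalSemiring R] [StarRing R] {P : ι → R}
    {s : Finset ι} (hP : ∀ i ∈ s, IsStarProjection (P i))
    (horth : (s : Set ι).Pairwise fun i j => P i * P j = 0) :
    IsStarProjection (∑ i ∈ s, P i) where
  isIdempotentElem := by
    rw [IsIdempotentElem, Finset.sum_mul_sum]
    refine Finset.sum_congr rfl fun i hi => ?_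
    rw [Finset.sum_eq_single_of_mem i hi fun j hj hji => horth hi hj hji.symm]
    exact (hP i hi).isIdempotentElem
  isSelfAdjoint := isSelfAdjoint_sum s fun i hi => (hP i hi).isSelfAdjoint

namespace IsStarProjection

variable {A : Type*} [CStarAlgebra A] [PartialOrder A] [StarOrderedRing A]

theorem mul_eq_zero_of_add_le_one {p q : A} (hp : IsStarProjection p) (hq : IsStarProjection q)
    (h : p + q ≤ 1) : p * q = 0 := by
  have hq_le : q ≤ 1 - p := le_sub_iff_add_le'.mpr h
  have hq_absorbed := (hp.one_sub.mul_right_and_mul_left_of_nonneg_of_le hq.nonneg hq_le).2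
  rwa [sub_mul, one_mul, sub_eq_self] at hq_absorbed

theorem mul_eq_zero_of_sum_eq_one {ι : Type*} {P : ι → A} {s : Finset ι}
    (hP : ∀ i ∈ s, IsStarProjection (P i)) (hs : ∑ i ∈ s, P i = 1) {i j : ι}
    (hi : i ∈ s) (hj : j ∈ s) (hij : i ≠ j) : P i * P j = 0 := by
  classical
  refine (hP i hi).mul_eq_zero_of_add_le_one (hP j hj) ?_
  calc P i + P j = ∑ k ∈ {i, j}, P k := (Finset.sum_pair hij).symm
    _ ≤ ∑ k ∈ s, P k :=
      Finset.sum_le_sum_of_subset_of_nonneg (by simp [Finset.insert_subset_iff, hi, hj])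
        fun k hk _ => (hP k hk).nonneg
    _ = 1 := hs

end IsStarProjection

namespace Matrix

variable {n 𝕜 : Type*} [Fintype n] [RCLike 𝕜]

theorem PosSemidef.trace_mul_nonneg {A B : Matrix n n 𝕜} (hA : A.PosSemidef)
    (hB : B.PosSemidef) : 0 ≤ (A * B).trace := by
  classical
  obtain ⟨X, rfl⟩ := CStarAlgebra.nonneg_iff_eq_star_mul_self.mp hB.nonneg
  rw [star_eq_conjTranspose, ← Matrix.mul_assoc, trace_mul_comm, ← Matrix.mul_assoc]
  exact (hA.mul_mul_conjTranspose_same X).trace_nonneg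

theorem PosSemidef.trace_mul_le_trace_mul_of_le {A B ρ : Matrix n n 𝕜} (hAB : A ≤ B)
    (hρ : ρ.PosSemidef) : (A * ρ).trace ≤ (B * ρ).trace := by
  have h := PosSemidef.trace_mul_nonneg hAB hρ
  rwa [Matrix.sub_mul, trace_sub, sub_nonneg] at h

end Matrix

theorem quantum_model_satisfies_CE_general {V : Type*}
    (E : Finset (Finset V)) (S : Finset V)
    (hexc : ∀ u ∈ S, ∀ v ∈ S, u ≠ v → ∃ e ∈ E, u ∈ e ∧ v ∈ e)
    (n : ℕ) (ρ : Matrix (Fin n) (Fin n) ℂ)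
    (hρ : ρ.PosSemidef) (htr : ρ.trace = 1)
    (P : V → Matrix (Fin n) (Fin n) ℂ)
    (hPh : ∀ v, (P v).IsHermitian) (hP2 : ∀ v, P v * P v = P v)
    (hnorm : ∀ e ∈ E, ∑ v ∈ e, P v = 1)
    (p : V → ℝ) (hp : ∀ v, (p v : ℂ) = (P v * ρ).trace) :
    ∑ v ∈ S, p v ≤ 1 := by
  have hproj : ∀ v, IsStarProjection (P v) := fun v => ⟨hP2 v, hPh v⟩
  have horth : (S : Set V).Pairwise fun u v => P u * P v = 0 := fun u hu v hv huv => by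
    obtain ⟨e, he, hue, hve⟩ := hexc u hu v hv huv
    exact IsStarProjection.mul_eq_zero_of_sum_eq_one (fun w _ => hproj w) (hnorm e he) hue hve huv
  have hQ : ∑ v ∈ S, P v ≤ 1 := (isStarProjection_sum (fun v _ => hproj v) horth).le_one
  have hsum : ((∑ v ∈ S, p v : ℝ) : ℂ) = ((∑ v ∈ S, P v) * ρ).trace := by
    push_cast
    simp_rw [hp, Finset.sum_mul, Matrix.trace_sum]
  have hbound := Matrix.PosSemidef.trace_mul_le_trace_mul_of_le hQ hρ
  rw [← hsum, Matrix.one_mul, htr] at hbound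
  exact_mod_cast hbound

/-- Quantum models satisfy all CE inequalities. -/
theorem quantum_model_satisfies_CE {V : Type*} [Fintype V] [DecidableEq V]
    (E : Finset (Finset V)) (S : Finset V)
    (hexc : ∀ u ∈ S, ∀ v ∈ S, u ≠ v → ∃ e ∈ E, u ∈ e ∧ v ∈ e)
    (n : ℕ) (ρ : Matrix (Fin n) (Fin n) ℂ)
    (hρ : ρ.PosSemidef) (htr : ρ.trace = 1)
    (P : V → Matrix (Fin n) (Fin n) ℂ)
    (hPh : ∀ v, (P v).IsHermitian) (hP2 : ∀ v, P v * P v = P v)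
    (hnorm : ∀ e ∈ E, ∑ v ∈ e, P v = 1)
    (p : V → ℝ) (hp : ∀ v, (p v : ℂ) = (P v * ρ).trace) :
    ∑ v ∈ S, p v ≤ 1 :=
  quantum_model_satisfies_CE_general E S hexc n ρ hρ htr P hPh hP2 hnorm p hp
end

section
/- In the (4,2) symmetric marginal scenario with binary outcomes, every classical model satisfies the pentagonal inequality: −⟨X₁X₂⟩ − ⟨X₁X₃⟩ + ⟨X₁X₄⟩ + ⟨X₁⟩ − ⟨X₂X₃⟩ + ⟨X₂X₄⟩ + ⟨X₂⟩ + ⟨X₃X₄⟩ + ⟨X₃⟩ − ⟨X₄⟩ ≤ 2. Equivalently, for every function x : {1,2,3,4} → {−1,+1}, one has −x₁x₂ − x₁x₃ + x₁x₄ + x₁ − x₂x₃ + x₂x₄ + x₂ + x₃x₄ + x₃ − x₄ ≤ 2. -/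
/-!
Negating the last sign, `y = (x₀, x₁, x₂, -x₃)`, turns the pentagonal expression into `s - e₂`,
where `s` is the sum and `e₂` the second elementary symmetric polynomial of the four signs
`yᵢ`. As `yᵢ² = 1`, we have `2 e₂ = s² - 4`, so twice the expression equals `4 - s (s - 2)`.
Being a sum of four odd integers, `s` is even, and `s (s - 2) < 0` only for `s = 1`.
-/

theorem two_mul_esymm_two_of_sq_eq_one {R : Type*} [CommRing R] {a b c d : R}
    (ha : a ^ 2 = 1) (hb : b ^ 2 = 1) (hc : c ^ 2 = 1) (hd : d ^ 2 = 1) :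
    2 * (a * b + a * c + a * d + b * c + b * d + c * d) = (a + b + c + d) ^ 2 - 4 := by
  linear_combination -ha - hb - hc - hd

theorem Int.mul_sub_two_nonneg_of_even {s : ℤ} (hs : Even s) : 0 ≤ s * (s - 2) := by
  obtain ⟨k, rfl⟩ := hs
  linear_combination 4 * Int.le_self_sq k

/-- Deterministic (hence, by convexity, all classical) models in the (4,2)
symmetric marginal scenario satisfy the pentagonal inequality. -/
theorem pentagonal_inequality_classical (x : Fin 4 → ℤ)
    (hx : ∀ i, x i = 1 ∨ x i = -1) :
    -(x 0 * x 1) - x 0 * x 2 + x 0 * x 3 + x 0 - x 1 * x 2 + x 1 * x 3 + x 1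
      + x 2 * x 3 + x 2 - x 3 ≤ 2 := by
  have hsq : ∀ i, x i ^ 2 = 1 := fun i => by rcases hx i with h | h <;> simp [h]
  have hodd : ∀ i, Odd (x i) := fun i => by rcases hx i with h | h <;> simp [h]
  have hs : Even (x 0 + x 1 + x 2 + -x 3) :=
    (((hodd 0).add_odd (hodd 1)).add_odd (hodd 2)).add_odd (hodd 3).neg
  have he₂ := two_mul_esymm_two_of_sq_eq_one (hsq 0) (hsq 1) (hsq 2)
    ((neg_sq (x 3)).trans (hsq 3))
  linarith [Int.mul_sub_two_nonneg_of_even hs]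
end
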